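/- arXiv:1608.07455 — 5 statements merged into one kernel-verified Lean document; each statement's English description precedes it below -/
import Mathlib

section
/- Let p > 1 and q > 0 be integers and let A ∈ ℝ^{(p+q)×(p+q)} be a positive operator of M(p,q) (i.e., A M(p,q) ⊆ M(p,q)). Then for each i = 1, …, p, the transpose of the i-th row of A belongs to L(p,q). -/
open Matrix Finset

/-- The extended Lorentz cone `L(p,q) = {(x,u) : x ≥ ‖u‖e componentwise}`. -/
noncomputable def Lcone (p q : ℕ) : Set (Fin (p + q) → ℝ) :=
  {z | ∀ i : Fin p,
    Real.sqrt (∑ j : Fin q, (z (Fin.natAdd p j)) ^ 2) ≤ z (Fin.castAdd q i)}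

/-- The extended Lorentz cone `M(p,q) = {(x,u) : ⟨x,e⟩ ≥ ‖u‖, x ≥ 0}`. -/
noncomputable def Mcone (p q : ℕ) : Set (Fin (p + q) → ℝ) :=
  {z | Real.sqrt (∑ j : Fin q, (z (Fin.natAdd p j)) ^ 2) ≤ ∑ i : Fin p, z (Fin.castAdd q i) ∧
    ∀ i : Fin p, 0 ≤ z (Fin.castAdd q i)}

theorem stmt2 (p q : ℕ) (hp : 1 < p) (hq : 0 < q)
    (A : Matrix (Fin (p + q)) (Fin (p + q)) ℝ)
    (hA : ∀ z ∈ Mcone p q, A.mulVec z ∈ Mcone p q) :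
    ∀ i : Fin p, (fun k => A (Fin.castAdd q i) k) ∈ Lcone p q := by
  intro i i'
  simp only [Lcone, Set.mem_setOf_eq]
  set v : Fin q → ℝ := fun j => A (Fin.castAdd q i) (Fin.natAdd p j) with hv
  set s : ℝ := Real.sqrt (∑ j : Fin q, v j ^ 2) with hs
  have hs0 : 0 ≤ s := Real.sqrt_nonneg _
  have key : ∀ u : Fin q → ℝ, Real.sqrt (∑ j : Fin q, u j ^ 2) ≤ 1 →
      0 ≤ A (Fin.castAdd q i) (Fin.castAdd q i') + ∑ j : Fin q, v j * u j := by
    intro u hu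
    set z : Fin (p + q) → ℝ :=
      Fin.addCases (fun k => if k = i' then (1:ℝ) else 0) u with hz
    have hxz : ∀ k : Fin p, z (Fin.castAdd q k) = if k = i' then (1:ℝ) else 0 := by
      intro k; simp [hz]
    have huz : ∀ j : Fin q, z (Fin.natAdd p j) = u j := by
      intro j; simp [hz]
    have hmem : z ∈ Mcone p q := by
      constructor
      · simp only [huz, hxz, Finset.sum_ite_eq' Finset.univ i', Finset.mem_univ, if_true]
        exact hu
      · intro k; rw [hxz]; split <;> norm_num
    have h2 := (hA z hmem).2 i
    have hmv : (A.mulVec z) (Fin.castAdd q i)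
        = A (Fin.castAdd q i) (Fin.castAdd q i') + ∑ j : Fin q, v j * u j := by
      simp only [Matrix.mulVec, dotProduct]
      rw [Fin.sum_univ_add]
      congr 1
      · simp only [hxz, mul_ite, mul_one, mul_zero]
        simp [Finset.sum_ite_eq' Finset.univ i']
      · exact Finset.sum_congr rfl fun j _ => by rw [huz]
    rw [hmv] at h2
    exact h2
  rcases eq_or_lt_of_le hs0 with h0 | hpos
  · have := key (fun _ => 0) (by simp)
    simpa [← h0] using this
  · have hsum : ∑ j : Fin q, v j ^ 2 = s ^ 2 := by
      rw [hs, Real.sq_sqrt]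
      positivity
    have hu1 : Real.sqrt (∑ j : Fin q, (-v j / s) ^ 2) ≤ 1 := by
      have : ∑ j : Fin q, (-v j / s) ^ 2 = (∑ j : Fin q, v j ^ 2) / s ^ 2 := by
        rw [Finset.sum_div]
        exact Finset.sum_congr rfl fun j _ => by ring
      rw [this, hsum, div_self (by positivity), Real.sqrt_one]
    have hk := key (fun j => -v j / s) hu1
    have hdot : ∑ j : Fin q, v j * (-v j / s) = -s := by
      have h1 : ∑ j : Fin q, v j * (-v j / s) = (∑ j : Fin q, -(v j ^ 2)) / s := by
        rw [Finset.sum_div]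
        exact Finset.sum_congr rfl fun j _ => by ring
      rw [h1, Finset.sum_neg_distrib, hsum, neg_div, sq, mul_div_assoc,
        div_self hpos.ne', mul_one]
    simp only [hdot] at hk
    linarith
end

section
/- Let p > 1 and q > 0 be integers and let A ∈ ℝ^{(p+q)×(p+q)}. Suppose there exists λ ≥ 0 such that Aᵀ J A − λ J is positive semidefinite, where J is the (p+q)×(p+q) block-diagonal matrix with upper-left p×p block E (all entries 1) and lower-right q×q block −I, and suppose that the transposes of the first p rows of A belong to L(p,q). Then A is a positive operator of M(p,q), i.e., A M(p,q) ⊆ M(p,q). -/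
open Matrix Finset

/-- The block-diagonal matrix `J` with upper-left `p × p` block all ones and
lower-right `q × q` block `-I`. -/
def Jmat (p q : ℕ) : Matrix (Fin (p + q)) (Fin (p + q)) ℝ :=
  Matrix.of fun i j => if (i : ℕ) < p ∧ (j : ℕ) < p then 1 else if i = j then -1 else 0

lemma Jmul_top (p q : ℕ) (v : Fin (p+q) → ℝ) (i : Fin p) :
    (Jmat p q).mulVec v (Fin.castAdd q i) = ∑ i' : Fin p, v (Fin.castAdd q i') := by
  rw [mulVec, dotProduct, Fin.sum_univ_add]
  have h1 : ∀ i' : Fin p, Jmat p q (Fin.castAdd q i) (Fin.castAdd q i') = 1 := by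
    intro i'; simp [Jmat, i.isLt, i'.isLt]
  have h2 : ∀ j : Fin q, Jmat p q (Fin.castAdd q i) (Fin.natAdd p j) = 0 := by
    intro j
    have hne : Fin.castAdd q i ≠ Fin.natAdd p j := by
      intro h
      have := congrArg (Fin.val) h
      simp at this
      omega
    simp [Jmat, hne]
  simp [h1, h2]

lemma Jmul_bot (p q : ℕ) (v : Fin (p+q) → ℝ) (j : Fin q) :
    (Jmat p q).mulVec v (Fin.natAdd p j) = - v (Fin.natAdd p j) := by
  rw [mulVec, dotProduct, Fin.sum_univ_add]
  have h1 : ∀ i' : Fin p, Jmat p q (Fin.natAdd p j) (Fin.castAdd q i') = 0 := by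
    intro i'
    have hne : Fin.natAdd p j ≠ Fin.castAdd q i' := by
      intro h
      have := congrArg (Fin.val) h
      simp at this
      omega
    simp [Jmat, hne]
  have h2 : ∀ j' : Fin q,
      Jmat p q (Fin.natAdd p j) (Fin.natAdd p j') = if j = j' then -1 else 0 := by
    intro j'
    by_cases h : j = j'
    · subst h; simp [Jmat]
    · have hne : Fin.natAdd p j ≠ Fin.natAdd p j' := by
        intro hh
        exact h (by simpa [Fin.ext_iff] using congrArg Fin.val hh)
      simp [Jmat, hne, h]
  simp [h1, h2, Finset.sum_ite_eq, ite_mul]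

lemma dot_J (p q : ℕ) (v : Fin (p+q) → ℝ) :
    v ⬝ᵥ (Jmat p q).mulVec v
      = (∑ i : Fin p, v (Fin.castAdd q i))^2 - ∑ j : Fin q, (v (Fin.natAdd p j))^2 := by
  have ht : ∑ i : Fin p, v (Fin.castAdd q i) * (Jmat p q).mulVec v (Fin.castAdd q i)
      = (∑ i : Fin p, v (Fin.castAdd q i))^2 := by
    simp only [Jmul_top]; rw [← Finset.sum_mul, sq]
  have hb : ∑ j : Fin q, v (Fin.natAdd p j) * (Jmat p q).mulVec v (Fin.natAdd p j)
      = - ∑ j : Fin q, (v (Fin.natAdd p j))^2 := by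
    rw [← Finset.sum_neg_distrib]
    apply Finset.sum_congr rfl; intro j _; rw [Jmul_bot]; ring
  rw [dotProduct, Fin.sum_univ_add, ht, hb, sub_eq_add_neg]

theorem stmt6 (p q : ℕ) (hp : 1 < p) (hq : 0 < q)
    (A : Matrix (Fin (p + q)) (Fin (p + q)) ℝ) (lam : ℝ) (hlam : 0 ≤ lam)
    (hpsd : ∀ z : Fin (p + q) → ℝ,
      0 ≤ z ⬝ᵥ (Aᵀ * Jmat p q * A - lam • Jmat p q).mulVec z)
    (hrows : ∀ i : Fin p, (fun k => A (Fin.castAdd q i) k) ∈ Lcone p q) :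
    ∀ z ∈ Mcone p q, A.mulVec z ∈ Mcone p q := by
  intro z hz
  obtain ⟨hz1, hz2⟩ := hz
  set S := ∑ i : Fin p, z (Fin.castAdd q i) with hS
  set N := Real.sqrt (∑ j : Fin q, (z (Fin.natAdd p j)) ^ 2) with hN
  have hNnn : 0 ≤ N := Real.sqrt_nonneg _
  have hSnn : 0 ≤ S := le_trans hNnn hz1
  set w := A.mulVec z with hw
  -- Part 1: nonnegativity of top components of w
  have part1 : ∀ i : Fin p, 0 ≤ w (Fin.castAdd q i) := by
    intro i
    set c := Real.sqrt (∑ j : Fin q, (A (Fin.castAdd q i) (Fin.natAdd p j)) ^ 2) with hc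
    have hcnn : 0 ≤ c := Real.sqrt_nonneg _
    have hrow := hrows i
    simp only [Lcone, Set.mem_setOf_eq] at hrow
    have hwi : w (Fin.castAdd q i)
        = ∑ i' : Fin p, A (Fin.castAdd q i) (Fin.castAdd q i') * z (Fin.castAdd q i')
          + ∑ j : Fin q, A (Fin.castAdd q i) (Fin.natAdd p j) * z (Fin.natAdd p j) := by
      rw [hw, mulVec, dotProduct, Fin.sum_univ_add]
    have h1 : c * S ≤ ∑ i' : Fin p,
        A (Fin.castAdd q i) (Fin.castAdd q i') * z (Fin.castAdd q i') := by
      rw [hS, Finset.mul_sum]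
      apply Finset.sum_le_sum
      intro i' _
      exact mul_le_mul_of_nonneg_right (hrow i') (hz2 i')
    have h2 : -(c * N) ≤ ∑ j : Fin q,
        A (Fin.castAdd q i) (Fin.natAdd p j) * z (Fin.natAdd p j) := by
      rw [neg_le]
      calc -(∑ j : Fin q, A (Fin.castAdd q i) (Fin.natAdd p j) * z (Fin.natAdd p j))
          = ∑ j : Fin q, A (Fin.castAdd q i) (Fin.natAdd p j) * (-(z (Fin.natAdd p j))) := by
            rw [← Finset.sum_neg_distrib]; apply Finset.sum_congr rfl; intros; ring
        _ ≤ Real.sqrt (∑ j : Fin q, (A (Fin.castAdd q i) (Fin.natAdd p j))^2)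
            * Real.sqrt (∑ j : Fin q, (-(z (Fin.natAdd p j)))^2) :=
            Real.sum_mul_le_sqrt_mul_sqrt _ _ _
        _ = c * N := by rw [hc, hN]; congr 2; apply Finset.sum_congr rfl; intros; ring
    have : c * S - c * N ≤ w (Fin.castAdd q i) := by
      rw [hwi]
      have := add_le_add h1 h2
      linarith
    have hfin : 0 ≤ c * S - c * N := by
      have : c * N ≤ c * S := mul_le_mul_of_nonneg_left hz1 hcnn
      linarith
    linarith
  -- Part 2
  have hJz : z ⬝ᵥ (Jmat p q).mulVec z = S^2 - N^2 := by
    rw [dot_J, hN, Real.sq_sqrt (Finset.sum_nonneg fun j _ => sq_nonneg _)]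
  have hJznn : 0 ≤ z ⬝ᵥ (Jmat p q).mulVec z := by
    rw [hJz]
    have : N^2 ≤ S^2 := by
      apply sq_le_sq' <;> nlinarith
    linarith
  have key : 0 ≤ w ⬝ᵥ (Jmat p q).mulVec w := by
    have h := hpsd z
    rw [sub_mulVec, dotProduct_sub, smul_mulVec, dotProduct_smul] at h
    have hABA : z ⬝ᵥ (Aᵀ * Jmat p q * A).mulVec z = w ⬝ᵥ (Jmat p q).mulVec w := by
      rw [hw, ← mulVec_mulVec, ← mulVec_mulVec, dotProduct_mulVec z Aᵀ, vecMul_transpose]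
    rw [hABA] at h
    have : 0 ≤ lam * (z ⬝ᵥ (Jmat p q).mulVec z) := mul_nonneg hlam hJznn
    simp only [smul_eq_mul] at h
    linarith
  rw [dot_J] at key
  constructor
  · have hT : 0 ≤ ∑ i : Fin p, w (Fin.castAdd q i) := Finset.sum_nonneg fun i _ => part1 i
    have : ∑ j : Fin q, (w (Fin.natAdd p j))^2 ≤ (∑ i : Fin p, w (Fin.castAdd q i))^2 := by
      linarith
    calc Real.sqrt (∑ j : Fin q, (w (Fin.natAdd p j))^2)
        ≤ Real.sqrt ((∑ i : Fin p, w (Fin.castAdd q i))^2) := Real.sqrt_le_sqrt this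
      _ = ∑ i : Fin p, w (Fin.castAdd q i) := Real.sqrt_sq hT
  · exact part1
end

section
/- Let p ≥ 1 and q ≥ 1 be integers. The dual cone of the extended Lorentz cone L(p,q) in ℝ^{p+q} is M(p,q), and the dual cone of M(p,q) is L(p,q); i.e., L(p,q) and M(p,q) are mutually dual cones. -/
open Matrix Finset

/-- The dual cone `K* = {y : ⟨x,y⟩ ≥ 0 for all x ∈ K}`. -/
def dualCone {n : ℕ} (K : Set (Fin n → ℝ)) : Set (Fin n → ℝ) :=
  {y | ∀ x ∈ K, 0 ≤ x ⬝ᵥ y}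

/-- Abbreviation: the "norm" of the `u` part. -/
noncomputable def Snorm {p q : ℕ} (z : Fin (p + q) → ℝ) : ℝ :=
  Real.sqrt (∑ j : Fin q, (z (Fin.natAdd p j)) ^ 2)

lemma Snorm_nonneg {p q : ℕ} (z : Fin (p + q) → ℝ) : 0 ≤ Snorm z :=
  Real.sqrt_nonneg _

lemma Snorm_sq {p q : ℕ} (z : Fin (p + q) → ℝ) :
    Snorm z ^ 2 = ∑ j : Fin q, (z (Fin.natAdd p j)) ^ 2 :=
  Real.sq_sqrt (Finset.sum_nonneg fun _ _ => sq_nonneg _)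

/-- Cauchy–Schwarz, lower bound form. -/
lemma cs_lower {p q : ℕ} (z y : Fin (p + q) → ℝ) :
    -(Snorm z * Snorm y) ≤ ∑ j : Fin q, z (Fin.natAdd p j) * y (Fin.natAdd p j) := by
  have h := Real.sum_mul_le_sqrt_mul_sqrt (Finset.univ : Finset (Fin q))
    (fun j => -(z (Fin.natAdd p j))) (fun j => y (Fin.natAdd p j))
  simp only [neg_sq, neg_mul, Finset.sum_neg_distrib] at h
  unfold Snorm
  linarith [h]

lemma dot_split {p q : ℕ} (z y : Fin (p + q) → ℝ) :
    z ⬝ᵥ y = ∑ i : Fin p, z (Fin.castAdd q i) * y (Fin.castAdd q i) +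
      ∑ j : Fin q, z (Fin.natAdd p j) * y (Fin.natAdd p j) := by
  simp [dotProduct, Fin.sum_univ_add]

lemma M_sub_dualL (p q : ℕ) : Mcone p q ⊆ dualCone (Lcone p q) := by
  intro y hy z hz
  obtain ⟨hy1, hy2⟩ := hy
  rw [dot_split]
  have hzS : ∀ i : Fin p, Snorm z ≤ z (Fin.castAdd q i) := hz
  have h1 : Snorm z * Snorm y ≤ ∑ i : Fin p, z (Fin.castAdd q i) * y (Fin.castAdd q i) := by
    calc Snorm z * Snorm y ≤ Snorm z * ∑ i : Fin p, y (Fin.castAdd q i) :=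
          mul_le_mul_of_nonneg_left hy1 (Snorm_nonneg z)
      _ = ∑ i : Fin p, Snorm z * y (Fin.castAdd q i) := by rw [Finset.mul_sum]
      _ ≤ ∑ i : Fin p, z (Fin.castAdd q i) * y (Fin.castAdd q i) :=
          Finset.sum_le_sum fun i _ => mul_le_mul_of_nonneg_right (hzS i) (hy2 i)
  have h2 := cs_lower z y
  linarith

lemma L_sub_dualM (p q : ℕ) : Lcone p q ⊆ dualCone (Mcone p q) := by
  intro y hy z hz
  obtain ⟨hz1, hz2⟩ := hz
  rw [dot_split]
  have hyS : ∀ i : Fin p, Snorm y ≤ y (Fin.castAdd q i) := hy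
  have h1 : Snorm z * Snorm y ≤ ∑ i : Fin p, z (Fin.castAdd q i) * y (Fin.castAdd q i) := by
    calc Snorm z * Snorm y ≤ (∑ i : Fin p, z (Fin.castAdd q i)) * Snorm y :=
          mul_le_mul_of_nonneg_right hz1 (Snorm_nonneg y)
      _ = ∑ i : Fin p, z (Fin.castAdd q i) * Snorm y := by rw [Finset.sum_mul]
      _ ≤ ∑ i : Fin p, z (Fin.castAdd q i) * y (Fin.castAdd q i) :=
          Finset.sum_le_sum fun i _ => mul_le_mul_of_nonneg_left (hyS i) (hz2 i)
  have h2 := cs_lower z y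
  linarith

/-- The point with first block `x` and second block `u`. -/
noncomputable def glue {p q : ℕ} (x : Fin p → ℝ) (u : Fin q → ℝ) : Fin (p + q) → ℝ :=
  Fin.append x u

@[simp] lemma glue_left {p q : ℕ} (x : Fin p → ℝ) (u : Fin q → ℝ) (i : Fin p) :
    glue x u (Fin.castAdd q i) = x i := Fin.append_left x u i

@[simp] lemma glue_right {p q : ℕ} (x : Fin p → ℝ) (u : Fin q → ℝ) (j : Fin q) :
    glue x u (Fin.natAdd p j) = u j := Fin.append_right x u j

lemma Snorm_glue {p q : ℕ} (x : Fin p → ℝ) (u : Fin q → ℝ) :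
    Snorm (glue x u) = Real.sqrt (∑ j : Fin q, u j ^ 2) := by
  unfold Snorm; simp

lemma dualL_sub_M (p q : ℕ) : dualCone (Lcone p q) ⊆ Mcone p q := by
  intro y hy
  set v : Fin q → ℝ := fun j => y (Fin.natAdd p j) with hv
  set N : ℝ := Real.sqrt (∑ j : Fin q, v j ^ 2) with hN
  have hN0 : 0 ≤ N := Real.sqrt_nonneg _
  have hNsq : N ^ 2 = ∑ j : Fin q, v j ^ 2 :=
    Real.sq_sqrt (Finset.sum_nonneg fun _ _ => sq_nonneg _)
  -- nonnegativity of each coordinate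
  have hpos : ∀ i : Fin p, 0 ≤ y (Fin.castAdd q i) := by
    intro i
    have hmem : glue (fun j => if j = i then (1:ℝ) else 0) (fun _ => 0) ∈ Lcone p q := by
      intro k
      simp only [glue_left, glue_right]
      rw [show ∑ _j : Fin q, (0:ℝ) ^ 2 = 0 by simp, Real.sqrt_zero]
      positivity
    have := hy _ hmem
    rw [dot_split] at this
    simpa [ite_mul, Finset.sum_ite_eq'] using this
  constructor
  · -- N ≤ ∑ y_i
    have hmem : glue (fun _ => N) (fun j => -(v j)) ∈ Lcone p q := by
      intro k
      simp only [glue_left, glue_right]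
      rw [show ∑ j : Fin q, (-(v j)) ^ 2 = ∑ j : Fin q, v j ^ 2 by simp, ← hN]
    have h := hy _ hmem
    rw [dot_split] at h
    simp only [glue_left, glue_right, neg_mul, Finset.sum_neg_distrib] at h
    have h' : 0 ≤ N * (∑ i : Fin p, y (Fin.castAdd q i)) - N ^ 2 := by
      have e1 : ∑ i : Fin p, N * y (Fin.castAdd q i)
          = N * ∑ i : Fin p, y (Fin.castAdd q i) := by rw [Finset.mul_sum]
      have e2 : ∑ j : Fin q, v j * v j = N ^ 2 := by rw [hNsq]; exact Finset.sum_congr rfl (by intros; ring)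
      rw [e1, e2] at h
      linarith
    rcases eq_or_lt_of_le hN0 with h0 | h0
    · show N ≤ ∑ i : Fin p, y (Fin.castAdd q i)
      rw [← h0]
      exact Finset.sum_nonneg fun i _ => hpos i
    · nlinarith
  · exact hpos

lemma dualM_sub_L (p q : ℕ) (hp : 1 ≤ p) : dualCone (Mcone p q) ⊆ Lcone p q := by
  intro y hy i
  set v : Fin q → ℝ := fun j => y (Fin.natAdd p j) with hv
  set N : ℝ := Real.sqrt (∑ j : Fin q, v j ^ 2) with hN
  have hN0 : 0 ≤ N := Real.sqrt_nonneg _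
  have hNsq : N ^ 2 = ∑ j : Fin q, v j ^ 2 :=
    Real.sq_sqrt (Finset.sum_nonneg fun _ _ => sq_nonneg _)
  show N ≤ y (Fin.castAdd q i)
  rcases eq_or_lt_of_le hN0 with h0 | h0
  · -- N = 0 : reduce to nonnegativity
    have hmem : glue (fun j => if j = i then (1:ℝ) else 0) (fun _ => 0) ∈ Mcone p q := by
      constructor
      · simp only [glue_left, glue_right]
        rw [show ∑ _j : Fin q, (0:ℝ) ^ 2 = 0 by simp, Real.sqrt_zero]
        refine Finset.sum_nonneg fun k _ => ?_
        positivity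
      · intro k; rw [glue_left]; positivity
    have h := hy _ hmem
    rw [dot_split] at h
    rw [← h0]
    simpa [ite_mul, Finset.sum_ite_eq'] using h
  · -- N > 0 : use x = N·e_i, u = -v
    have hmem : glue (fun j => if j = i then N else 0) (fun j => -(v j)) ∈ Mcone p q := by
      constructor
      · simp only [glue_left, glue_right]
        rw [show ∑ j : Fin q, (-(v j)) ^ 2 = ∑ j : Fin q, v j ^ 2 by simp, ← hN]
        simp [Finset.sum_ite_eq']
      · intro k; rw [glue_left]; split <;> simp [h0.le]
    have h := hy _ hmem
    rw [dot_split] at h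
    simp only [glue_left, glue_right, neg_mul, ite_mul, zero_mul,
      Finset.sum_ite_eq', Finset.mem_univ, if_true, Finset.sum_neg_distrib] at h
    have e2 : ∑ j : Fin q, v j * v j = N ^ 2 := by
      rw [hNsq]; exact Finset.sum_congr rfl (by intros; ring)
    rw [e2] at h
    nlinarith

theorem stmt7 (p q : ℕ) (hp : 1 ≤ p) (hq : 1 ≤ q) :
    dualCone (Lcone p q) = Mcone p q ∧ dualCone (Mcone p q) = Lcone p q := by
  constructor
  · exact Set.Subset.antisymm (dualL_sub_M p q) (M_sub_dualL p q)
  · exact Set.Subset.antisymm (dualM_sub_L p q hp) (L_sub_dualM p q)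
end

section
/- Let p ≥ 1 and q ≥ 1 be integers. The extended Lorentz cone L(p,q) is self-dual (i.e., equal to its dual cone L(p,q)* = {y ∈ ℝ^{p+q} : ⟨z, y⟩ ≥ 0 for all z ∈ L(p,q)}) if and only if p = 1. -/
open Matrix Finset

lemma cs_lower_s11 (q : ℕ) (f g : Fin q → ℝ) :
    -(Real.sqrt (∑ j, f j ^ 2) * Real.sqrt (∑ j, g j ^ 2)) ≤ ∑ j, f j * g j := by
  have hA : (0:ℝ) ≤ ∑ j, f j ^ 2 := Finset.sum_nonneg fun j _ => sq_nonneg _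
  have hB : (0:ℝ) ≤ ∑ j, g j ^ 2 := Finset.sum_nonneg fun j _ => sq_nonneg _
  have h := Finset.sum_mul_sq_le_sq_mul_sq Finset.univ f g
  have h2 : |∑ j, f j * g j| ≤ Real.sqrt (∑ j, f j ^ 2) * Real.sqrt (∑ j, g j ^ 2) := by
    rw [← Real.sqrt_sq_eq_abs, ← Real.sqrt_mul hA]
    exact Real.sqrt_le_sqrt h
  linarith [neg_abs_le (∑ j, f j * g j)]

theorem stmt11 (p q : ℕ) (hp : 1 ≤ p) (hq : 1 ≤ q) :
    dualCone (Lcone p q) = Lcone p q ↔ p = 1 := by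
  constructor
  · intro hdual
    by_contra hne
    have hp2 : 2 ≤ p := by omega
    set i0 : Fin p := ⟨0, by omega⟩
    set i1 : Fin p := ⟨1, by omega⟩
    set j0 : Fin q := ⟨0, by omega⟩
    set y : Fin (p + q) → ℝ :=
      Fin.addCases (fun i => if i = i0 then (1:ℝ) else 0)
        (fun j => if j = j0 then (1:ℝ) else 0) with hy
    have hyL : y ∈ dualCone (Lcone p q) := by
      intro x hx
      have hx0 := hx i0
      have hsq : x (Fin.natAdd p j0) ^ 2 ≤ ∑ j : Fin q, (x (Fin.natAdd p j)) ^ 2 :=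
        Finset.single_le_sum (f := fun j => (x (Fin.natAdd p j)) ^ 2)
          (fun j _ => sq_nonneg _) (Finset.mem_univ j0)
      have habs : |x (Fin.natAdd p j0)| ≤ x (Fin.castAdd q i0) := by
        calc |x (Fin.natAdd p j0)| = Real.sqrt (x (Fin.natAdd p j0) ^ 2) :=
              (Real.sqrt_sq_eq_abs _).symm
          _ ≤ Real.sqrt (∑ j : Fin q, (x (Fin.natAdd p j)) ^ 2) := Real.sqrt_le_sqrt hsq
          _ ≤ x (Fin.castAdd q i0) := hx0
      have hdot : x ⬝ᵥ y = x (Fin.castAdd q i0) + x (Fin.natAdd p j0) := by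
        simp only [dotProduct, Fin.sum_univ_add, hy, Fin.addCases_left, Fin.addCases_right,
          mul_ite, mul_one, mul_zero]
        rw [Finset.sum_ite_eq' Finset.univ i0 (fun i => x (Fin.castAdd q i)),
          Finset.sum_ite_eq' Finset.univ j0 (fun j => x (Fin.natAdd p j))]
        simp
      rw [hdot]
      have := neg_abs_le (x (Fin.natAdd p j0))
      linarith
    rw [hdual] at hyL
    have h1 := hyL i1
    have hv : ∑ j : Fin q, (y (Fin.natAdd p j)) ^ 2 = 1 := by
      simp only [hy, Fin.addCases_right, ite_pow, one_pow,
        zero_pow (by norm_num : (2:ℕ) ≠ 0)]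
      rw [Finset.sum_ite_eq' Finset.univ j0 (fun _ => (1:ℝ))]
      simp
    have hx1 : y (Fin.castAdd q i1) = 0 := by
      simp only [hy, Fin.addCases_left]
      have : i1 ≠ i0 := by simp [i1, i0, Fin.ext_iff]
      simp [this]
    rw [hv, hx1, Real.sqrt_one] at h1
    linarith
  · rintro rfl
    ext y
    constructor
    · intro hy
      intro i
      have hi : i = (0 : Fin 1) := Subsingleton.elim _ _
      subst hi
      set s := Real.sqrt (∑ j : Fin q, (y (Fin.natAdd 1 j)) ^ 2) with hs
      have hsnn : 0 ≤ s := Real.sqrt_nonneg _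
      have hBnn : (0:ℝ) ≤ ∑ j : Fin q, (y (Fin.natAdd 1 j)) ^ 2 :=
        Finset.sum_nonneg fun j _ => sq_nonneg _
      set x : Fin (1 + q) → ℝ :=
        Fin.addCases (fun _ => s) (fun j => -(y (Fin.natAdd 1 j))) with hx
      have h1 : ∀ j : Fin q, x (Fin.natAdd 1 j) = -(y (Fin.natAdd 1 j)) := by
        intro j; simp [hx]
      have h2 : ∀ i : Fin 1, x (Fin.castAdd q i) = s := by
        intro i; simp [hx]
      have hxL : x ∈ Lcone 1 q := by
        intro i
        rw [h2 i, Finset.sum_congr rfl (fun j _ => by rw [h1 j, neg_sq]), ← hs]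
      have hd := hy x hxL
      have hdot : x ⬝ᵥ y = s * y (Fin.castAdd q 0) - ∑ j : Fin q, (y (Fin.natAdd 1 j)) ^ 2 := by
        simp only [dotProduct, Fin.sum_univ_add, Fin.sum_univ_one]
        rw [h2, Finset.sum_congr rfl (fun j _ => by rw [h1 j])]
        simp only [neg_mul, Finset.sum_neg_distrib, ← sq]
        ring
      rw [hdot] at hd
      have hs2 : s * s = ∑ j : Fin q, (y (Fin.natAdd 1 j)) ^ 2 := Real.mul_self_sqrt hBnn
      rcases eq_or_lt_of_le hsnn with h0 | h0
      · -- s = 0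
        rw [← h0]
        -- show 0 ≤ y (castAdd q 0) using indicator vector
        set x1 : Fin (1 + q) → ℝ := Fin.addCases (fun _ => (1:ℝ)) (fun _ => 0) with hx1
        have hx1L : x1 ∈ Lcone 1 q := by
          intro i
          simp [hx1]
        have := hy x1 hx1L
        have hd1 : x1 ⬝ᵥ y = y (Fin.castAdd q 0) := by
          simp [dotProduct, Fin.sum_univ_add, hx1]
        rw [hd1] at this
        exact this
      · -- s > 0
        have : s * s ≤ s * y (Fin.castAdd q 0) := by rw [hs2]; linarith
        exact le_of_mul_le_mul_left this h0
    · intro hy x hx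
      have hx0 := hx 0
      have hy0 := hy 0
      have hcs := cs_lower_s11 q (fun j => x (Fin.natAdd 1 j)) (fun j => y (Fin.natAdd 1 j))
      have hmul : Real.sqrt (∑ j : Fin q, (x (Fin.natAdd 1 j)) ^ 2) *
          Real.sqrt (∑ j : Fin q, (y (Fin.natAdd 1 j)) ^ 2) ≤
          x (Fin.castAdd q 0) * y (Fin.castAdd q 0) :=
        mul_le_mul hx0 hy0 (Real.sqrt_nonneg _) ((Real.sqrt_nonneg _).trans hx0)
      have hdot : x ⬝ᵥ y = x (Fin.castAdd q 0) * y (Fin.castAdd q 0) +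
          ∑ j : Fin q, x (Fin.natAdd 1 j) * y (Fin.natAdd 1 j) := by
        simp [dotProduct, Fin.sum_univ_add]
      rw [hdot]
      linarith
end

section
/- Let p > 1 and q > 0 be integers and let A ∈ ℝ^{(p+q)×(p+q)} be a positive operator of M(p,q) (i.e., A M(p,q) ⊆ M(p,q)). Let α_k denote the k-th column of A. Then for every z ∈ L(p,q), every i = 1, …, p, and every u = (u_1, …, u_q) ∈ ℝ^q with ‖u‖ = 1, one has ⟨z, α_i + Σ_{j=1}^{q} u_j α_{p+j}⟩ ≥ ⟨z, α_i⟩ − sqrt(Σ_{j=1}^{q} ⟨z, α_{p+j}⟩²) ≥ 0. -/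
open Matrix Finset

/-- Pairing of a vector in `L(p,q)` with a vector in `M(p,q)` is nonnegative. -/
lemma pair_nonneg {p q : ℕ} (z w : Fin (p + q) → ℝ)
    (hz : z ∈ Lcone p q) (hw : w ∈ Mcone p q) : 0 ≤ ∑ k, z k * w k := by
  obtain ⟨hw1, hw2⟩ := hw
  set sz := Real.sqrt (∑ j : Fin q, (z (Fin.natAdd p j)) ^ 2) with hsz
  have hsz0 : 0 ≤ sz := Real.sqrt_nonneg _
  have hsplit : ∑ k, z k * w k =
      (∑ m : Fin p, z (Fin.castAdd q m) * w (Fin.castAdd q m)) +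
      ∑ j : Fin q, z (Fin.natAdd p j) * w (Fin.natAdd p j) :=
    Fin.sum_univ_add (f := fun k => z k * w k)
  have h1 : sz * ∑ m : Fin p, w (Fin.castAdd q m) ≤
      ∑ m : Fin p, z (Fin.castAdd q m) * w (Fin.castAdd q m) := by
    rw [Finset.mul_sum]
    exact Finset.sum_le_sum fun m _ =>
      mul_le_mul_of_nonneg_right (hz m) (hw2 m)
  have h2 : ∑ j : Fin q, z (Fin.natAdd p j) * (-(w (Fin.natAdd p j))) ≤
      sz * Real.sqrt (∑ j : Fin q, (w (Fin.natAdd p j)) ^ 2) := by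
    have := Real.sum_mul_le_sqrt_mul_sqrt Finset.univ
      (fun j : Fin q => z (Fin.natAdd p j)) (fun j : Fin q => -(w (Fin.natAdd p j)))
    simpa [hsz] using this
  have h3 : sz * Real.sqrt (∑ j : Fin q, (w (Fin.natAdd p j)) ^ 2) ≤
      sz * ∑ m : Fin p, w (Fin.castAdd q m) :=
    mul_le_mul_of_nonneg_left hw1 hsz0
  have h4 : -(∑ j : Fin q, z (Fin.natAdd p j) * w (Fin.natAdd p j)) ≤
      ∑ m : Fin p, z (Fin.castAdd q m) * w (Fin.castAdd q m) := by
    calc -(∑ j : Fin q, z (Fin.natAdd p j) * w (Fin.natAdd p j))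
        = ∑ j : Fin q, z (Fin.natAdd p j) * (-(w (Fin.natAdd p j))) := by
          rw [← Finset.sum_neg_distrib]
          exact Finset.sum_congr rfl fun j _ => (mul_neg _ _).symm
      _ ≤ _ := h2.trans (h3.trans h1)
  rw [hsplit]
  linarith

theorem stmt13 (p q : ℕ) (hp : 1 < p) (hq : 0 < q)
    (A : Matrix (Fin (p + q)) (Fin (p + q)) ℝ)
    (hA : ∀ z ∈ Mcone p q, A.mulVec z ∈ Mcone p q)
    (z : Fin (p + q) → ℝ) (hz : z ∈ Lcone p q)
    (i : Fin p) (u : Fin q → ℝ) (hu : Real.sqrt (∑ j : Fin q, (u j) ^ 2) = 1) :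
    (z ⬝ᵥ (fun k => A k (Fin.castAdd q i)) -
        Real.sqrt (∑ j : Fin q, (z ⬝ᵥ (fun k => A k (Fin.natAdd p j))) ^ 2) ≤
      z ⬝ᵥ (fun k => A k (Fin.castAdd q i) + ∑ j : Fin q, u j * A k (Fin.natAdd p j))) ∧
    0 ≤ z ⬝ᵥ (fun k => A k (Fin.castAdd q i)) -
        Real.sqrt (∑ j : Fin q, (z ⬝ᵥ (fun k => A k (Fin.natAdd p j))) ^ 2) := by
  set t : ℝ := z ⬝ᵥ (fun k => A k (Fin.castAdd q i)) with ht
  set T : Fin q → ℝ := fun j => z ⬝ᵥ (fun k => A k (Fin.natAdd p j)) with hT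
  set S : ℝ := Real.sqrt (∑ j : Fin q, (T j) ^ 2) with hS
  have hswap : ∀ c : Fin q → ℝ,
      ∑ k, z k * ∑ j : Fin q, c j * A k (Fin.natAdd p j) = ∑ j : Fin q, c j * T j := by
    intro c
    simp only [hT, dotProduct, Finset.mul_sum]
    rw [Finset.sum_comm]
    exact Finset.sum_congr rfl fun j _ => Finset.sum_congr rfl fun k _ => by ring
  -- key: for any v with ‖v‖ ≤ 1, ∑ v j * T j ≤ t
  have key : ∀ v : Fin q → ℝ, Real.sqrt (∑ j : Fin q, (v j) ^ 2) ≤ 1 →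
      ∑ j : Fin q, v j * T j ≤ t := by
    intro v hv
    set w : Fin (p + q) → ℝ :=
      Fin.addCases (fun m : Fin p => if m = i then (1 : ℝ) else 0)
        (fun j : Fin q => -(v j)) with hwdef
    have hwc : ∀ m : Fin p, w (Fin.castAdd q m) = if m = i then (1:ℝ) else 0 := by
      intro m; simp [hwdef]
    have hwn : ∀ j : Fin q, w (Fin.natAdd p j) = -(v j) := by
      intro j; simp [hwdef]
    have hwM : w ∈ Mcone p q := by
      constructor
      · simp only [hwc, hwn, neg_sq]
        calc Real.sqrt (∑ j : Fin q, (v j) ^ 2) ≤ 1 := hv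
          _ = ∑ m : Fin p, if m = i then (1:ℝ) else 0 := by simp
      · intro m; rw [hwc]; positivity
    have hAwM := hA w hwM
    have hpair := pair_nonneg z (A.mulVec w) hz hAwM
    have hmv : ∀ k, (A.mulVec w) k
        = A k (Fin.castAdd q i) - ∑ j : Fin q, v j * A k (Fin.natAdd p j) := by
      intro k
      show ∑ l, A k l * w l = _
      rw [Fin.sum_univ_add (f := fun l => A k l * w l)]
      simp only [hwc, hwn, mul_ite, mul_one, mul_zero, mul_neg]
      rw [Finset.sum_ite_eq' Finset.univ i (fun m => A k (Fin.castAdd q m))]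
      simp [sub_eq_add_neg, mul_comm]
    have hexp : ∑ k, z k * (A.mulVec w) k = t - ∑ j : Fin q, v j * T j := by
      simp only [hmv, mul_sub, Finset.sum_sub_distrib]
      rw [hswap v]
      rfl
    rw [hexp] at hpair
    linarith
  have hS0 : 0 ≤ S := Real.sqrt_nonneg _
  have hsecond : 0 ≤ t - S := by
    rcases eq_or_lt_of_le hS0 with h0 | hpos
    · have := key (fun _ => 0) (by simp)
      simp at this
      linarith
    · have hSne : S ≠ 0 := ne_of_gt hpos
      have hSle : S ≤ t := by
        have hsum : ∑ j : Fin q, (T j) ^ 2 = S ^ 2 := by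
          rw [hS, Real.sq_sqrt (Finset.sum_nonneg fun j _ => sq_nonneg _)]
        have hv : Real.sqrt (∑ j : Fin q, (T j / S) ^ 2) ≤ 1 := by
          have h1 : ∑ j : Fin q, (T j / S) ^ 2 = 1 := by
            simp only [div_pow]
            rw [← Finset.sum_div, hsum, div_self (pow_ne_zero 2 hSne)]
          rw [h1, Real.sqrt_one]
        have hk := key (fun j => T j / S) hv
        have heq : ∑ j : Fin q, T j / S * T j = S := by
          have h2 : ∑ j : Fin q, T j / S * T j = (∑ j : Fin q, (T j)^2) / S := by
            rw [Finset.sum_div]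
            exact Finset.sum_congr rfl fun j _ => by ring
          rw [h2, hsum, sq, mul_div_assoc, div_self hSne, mul_one]
        linarith [heq ▸ hk]
      linarith
  refine ⟨?_, hsecond⟩
  -- first part: -∑ u j * T j ≤ S by Cauchy-Schwarz
  have hcs : ∑ j : Fin q, (-(u j)) * T j ≤
      Real.sqrt (∑ j : Fin q, (u j) ^ 2) * Real.sqrt (∑ j : Fin q, (T j) ^ 2) := by
    have := Real.sum_mul_le_sqrt_mul_sqrt Finset.univ (fun j : Fin q => -(u j)) T
    simpa using this
  rw [hu, one_mul, ← hS] at hcs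
  have hrhs : z ⬝ᵥ (fun k => A k (Fin.castAdd q i) + ∑ j : Fin q, u j * A k (Fin.natAdd p j)) =
      t + ∑ j : Fin q, u j * T j := by
    simp only [dotProduct, mul_add, Finset.sum_add_distrib]
    rw [hswap u]
    rfl
  rw [hrhs]
  have hneg : -(∑ j : Fin q, u j * T j) ≤ S := by
    calc -(∑ j : Fin q, u j * T j) = ∑ j : Fin q, (-(u j)) * T j := by
          rw [← Finset.sum_neg_distrib]
          exact Finset.sum_congr rfl fun j _ => (neg_mul _ _).symm
      _ ≤ S := hcs
  linarith
end
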